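/- arXiv:1706.02144 — 2 statements merged into one kernel-verified Lean document; each statement's English description precedes it below -/
import Mathlib

section
/- Let n be an odd perfect number with Euler form n = π^α · N². If σ(N²) = π^α (i.e., A = 1), then α ≥ ω(n) − 1 and 2·N² > π^α. -/
lemma sigma_gt_self {m : ℕ} (hm : 2 ≤ m) : m < ArithmeticFunction.sigma 1 m := by
  rw [ArithmeticFunction.sigma_one_apply]
  have hsub : ({1, m} : Finset ℕ) ⊆ m.divisors := by
    intro d hd
    simp only [Finset.mem_insert, Finset.mem_singleton] at hd
    rw [Nat.mem_divisors]
    rcases hd with rfl | rfl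
    · exact ⟨one_dvd _, by omega⟩
    · exact ⟨dvd_rfl, by omega⟩
  have h1 : ∑ d ∈ ({1, m} : Finset ℕ), d ≤ ∑ d ∈ m.divisors, d :=
    Finset.sum_le_sum_of_subset hsub
  rw [Finset.sum_pair (by omega)] at h1
  omega

theorem stmt_3 (n N p a : ℕ) (hn : 0 < n) (hN : 0 < N) (hodd : Odd n)
    (hperf : ArithmeticFunction.sigma 1 n = 2 * n)
    (hp : p.Prime) (hp4 : p % 4 = 1) (ha4 : a % 4 = 1)
    (hcop : Nat.Coprime p N) (hform : n = p ^ a * N ^ 2) :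
    ArithmeticFunction.sigma 1 (N ^ 2) = p ^ a → a ≥ n.primeFactors.card - 1 ∧ 2 * N ^ 2 > p ^ a := by
  intro hA
  have hp1 : 1 < p := hp.one_lt
  have ha0 : a ≠ 0 := by omega
  have hN2 : (N ^ 2 : ℕ) ≠ 0 := by positivity
  have hpa0 : p ^ a ≠ 0 := by positivity
  -- multiplicative factorization of sigma (N^2)
  have hfact : ArithmeticFunction.sigma 1 (N ^ 2) =
      ∏ q ∈ (N ^ 2).primeFactors, ArithmeticFunction.sigma 1 (q ^ (N ^ 2).factorization q) := by
    rw [ArithmeticFunction.isMultiplicative_sigma.multiplicative_factorization _ hN2,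
      Finsupp.prod, Nat.support_factorization]
  -- each factor is divisible by p
  have hdvd : ∀ q ∈ (N ^ 2).primeFactors, p ∣ ArithmeticFunction.sigma 1 (q ^ (N ^ 2).factorization q) := by
    intro q hq
    have hqp : q.Prime := Nat.prime_of_mem_primeFactors hq
    have hk : (N ^ 2).factorization q ≠ 0 := by
      rw [← Finsupp.mem_support_iff, Nat.support_factorization]; exact hq
    have hterm2 : 2 ≤ q ^ (N ^ 2).factorization q := by
      calc 2 ≤ q := hqp.two_le
      _ = q ^ 1 := (pow_one q).symm
      _ ≤ q ^ (N ^ 2).factorization q := Nat.pow_le_pow_right hqp.pos (by omega)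
    have hgt1 : 1 < ArithmeticFunction.sigma 1 (q ^ (N ^ 2).factorization q) :=
      lt_trans (by omega) (sigma_gt_self hterm2)
    have hdvdpa : ArithmeticFunction.sigma 1 (q ^ (N ^ 2).factorization q) ∣ p ^ a := by
      rw [← hA, hfact]
      exact Finset.dvd_prod_of_mem _ hq
    obtain ⟨k, hk_le, hk_eq⟩ := (Nat.dvd_prime_pow hp).mp hdvdpa
    have hk0 : k ≠ 0 := by
      rintro rfl; rw [pow_zero] at hk_eq; omega
    rw [hk_eq]
    exact dvd_pow_self p hk0
  -- p ^ card ∣ p ^ a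
  have hprod : p ^ (N ^ 2).primeFactors.card ∣ p ^ a := by
    have := Finset.prod_dvd_prod_of_dvd (fun _ => p)
      (fun q => ArithmeticFunction.sigma 1 (q ^ (N ^ 2).factorization q)) (fun q hq => hdvd q hq)
    rw [Finset.prod_const, ← hfact, hA] at this
    exact this
  have hcard_le : (N ^ 2).primeFactors.card ≤ a :=
    (Nat.pow_dvd_pow_iff_le_right hp1).mp hprod
  constructor
  · -- ω(n) - 1 ≤ a
    have hpf : n.primeFactors = (p ^ a).primeFactors ∪ (N ^ 2).primeFactors := by
      rw [hform, Nat.primeFactors_mul hpa0 hN2]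
    have hppf : (p ^ a).primeFactors = {p} := Nat.primeFactors_prime_pow ha0 hp
    have : n.primeFactors.card ≤ 1 + (N ^ 2).primeFactors.card := by
      rw [hpf, hppf]
      calc ({p} ∪ (N ^ 2).primeFactors).card ≤ ({p} : Finset ℕ).card + (N ^ 2).primeFactors.card :=
        Finset.card_union_le _ _
      _ = 1 + (N ^ 2).primeFactors.card := by simp
    omega
  · -- 2 * N^2 > p^a
    have hcop2 : Nat.Coprime (p ^ a) (N ^ 2) := Nat.Coprime.pow a 2 hcop
    have hmul : ArithmeticFunction.sigma 1 n =
        ArithmeticFunction.sigma 1 (p ^ a) * ArithmeticFunction.sigma 1 (N ^ 2) := by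
      rw [hform]
      exact ArithmeticFunction.isMultiplicative_sigma.map_mul_of_coprime hcop2
    rw [hperf, hform, hA] at hmul
    have heq : 2 * N ^ 2 = ArithmeticFunction.sigma 1 (p ^ a) := by
      have h := hmul
      have : p ^ a * (2 * N ^ 2) = p ^ a * ArithmeticFunction.sigma 1 (p ^ a) := by ring_nf; ring_nf at h; omega
      exact Nat.eq_of_mul_eq_mul_left (by positivity) this
    have hpa2 : 2 ≤ p ^ a := by
      calc 2 ≤ p := hp.two_le
      _ = p ^ 1 := (pow_one p).symm
      _ ≤ p ^ a := Nat.pow_le_pow_right hp.pos (by omega)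
    have := sigma_gt_self hpa2
    omega
end

section
/- Let n be an odd perfect number with Euler form n = π^α · N², and let A = σ(N²)/π^α. Then at least one of the following holds: (1) A > 1 and 2·N² > 3·π^α; (2) A = 1 and α ≥ ω(n) − 1 and 2·N² > π^α; (3) α ≥ ω(n) − 1 and 2·N² > π^α and 2·N² > 3·π^α. -/
/-!
By multiplicativity σ(π^α) σ(N²) = 2 π^α N², and σ(π^α) ≡ 1 (mod π), so π^α ∣ σ(N²) and
σ(π^α) A = 2 N². Since σ(π^α) > π^α, always 2 N² > π^α. Being a sum of α + 1 odd terms with α odd,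
σ(π^α) is even, so A is odd because N is: either A ≥ 3, and then 2 N² ≥ 3 σ(π^α) > 3 π^α, or A = 1.
In the latter case σ(N²) = π^α, so each of the ω(N) factors σ(q^e) ≠ 1 of σ(N²) is divisible by π,
whence ω(N) ≤ α and ω(n) ≤ α + 1.
-/

open ArithmeticFunction Finset Nat
open scoped ArithmeticFunction.sigma

namespace ArithmeticFunction

theorem lt_sigma_one_of_one_lt {n : ℕ} (hn : 1 < n) : n < σ 1 n := by
  rw [sigma_one_apply, sum_divisors_eq_sum_properDivisors_add_self]
  have : 0 < ∑ d ∈ n.properDivisors, d :=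
    sum_pos' (fun _ _ ↦ Nat.zero_le _) ⟨1, one_mem_properDivisors_iff_one_lt.mpr hn, one_pos⟩
  omega

theorem sigma_one_prime_pow_mod_self {p : ℕ} (hp : p.Prime) (a : ℕ) : σ 1 (p ^ a) % p = 1 := by
  obtain ⟨c, hc⟩ : p ∣ ∑ k ∈ range a, p ^ (k + 1) :=
    dvd_sum fun k _ ↦ dvd_pow_self p k.succ_ne_zero
  rw [sigma_one_apply_prime_pow hp, sum_range_succ', hc, pow_zero, mul_add_mod,
    mod_eq_of_lt hp.one_lt]

theorem coprime_sigma_one_prime_pow {p : ℕ} (hp : p.Prime) (a b : ℕ) :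
    Coprime (p ^ b) (σ 1 (p ^ a)) := by
  refine Coprime.pow_left b ((hp.coprime_iff_not_dvd).mpr fun h ↦ ?_)
  rw [dvd_iff_mod_eq_zero, sigma_one_prime_pow_mod_self hp] at h
  exact one_ne_zero h

theorem even_sigma_one_prime_pow {p a : ℕ} (hp : p.Prime) (hpo : Odd p) (ha : Odd a) :
    Even (σ 1 (p ^ a)) := by
  rw [sigma_one_apply_prime_pow hp, even_sum_iff_even_card_odd,
    filter_true_of_mem fun k _ ↦ hpo.pow, card_range]
  exact ha.add_one

theorem card_primeFactors_le_of_sigma_eq_prime_pow {m p a : ℕ} (hp : p.Prime) (hm : m ≠ 0)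
    (h : σ 1 m = p ^ a) : #m.primeFactors ≤ a := by
  have hfac : σ 1 m = ∏ q ∈ m.primeFactors, σ 1 (q ^ m.factorization q) := by
    rw [isMultiplicative_sigma.multiplicative_factorization _ hm,
      prod_factorization_eq_prod_primeFactors]
  have hdvd : ∀ q ∈ m.primeFactors, p ∣ σ 1 (q ^ m.factorization q) := by
    intro q hq
    obtain ⟨j, -, hj⟩ := (dvd_prime_pow hp).mp (h ▸ hfac ▸ dvd_prod_of_mem _ hq)
    have hqe : 1 < q ^ m.factorization q :=
      one_lt_pow (Finsupp.mem_support_iff.mp (support_factorization m ▸ hq))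
        (prime_of_mem_primeFactors hq).one_lt
    have hj0 : j ≠ 0 := by
      rintro rfl
      rw [pow_zero, sigma_eq_one_iff] at hj
      omega
    exact hj ▸ dvd_pow_self p hj0
  have : p ^ #m.primeFactors ∣ p ^ a := by
    rw [← h, hfac, ← prod_const]
    exact prod_dvd_prod_of_dvd _ _ hdvd
  exact (pow_dvd_pow_iff_le_right hp.one_lt).mp this

theorem card_primeFactors_prime_pow_mul_le {p a m : ℕ} (hp : p.Prime) (ha : a ≠ 0) (hm : m ≠ 0) :
    #(p ^ a * m).primeFactors ≤ #m.primeFactors + 1 := by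
  rw [primeFactors_mul (pow_ne_zero a hp.ne_zero) hm, primeFactors_prime_pow ha hp,
    singleton_union]
  exact card_insert_le p _

theorem exists_sigma_one_eq_prime_pow_mul {p a m : ℕ} (hp : p.Prime) (hcop : Coprime p m)
    (hperf : σ 1 (p ^ a * m) = 2 * (p ^ a * m)) :
    ∃ A, σ 1 m = p ^ a * A ∧ σ 1 (p ^ a) * A = 2 * m := by
  have hmul : σ 1 (p ^ a) * σ 1 m = p ^ a * (2 * m) := by
    rw [← isMultiplicative_sigma.map_mul_of_coprime (hcop.pow_left a), hperf]
    ring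
  obtain ⟨A, hA⟩ := (coprime_sigma_one_prime_pow hp a a).dvd_of_dvd_mul_left
    (Dvd.intro _ hmul.symm)
  refine ⟨A, hA, Nat.eq_of_mul_eq_mul_left (pow_pos hp.pos a) ?_⟩
  rw [← hmul, hA]
  ring

end ArithmeticFunction

theorem stmt_5_general (n N p a : ℕ) (hN : 0 < N) (hodd : Odd n)
    (hperf : ArithmeticFunction.sigma 1 n = 2 * n)
    (hp : p.Prime) (hp4 : p % 4 = 1) (ha4 : a % 4 = 1)
    (hcop : Nat.Coprime p N) (hform : n = p ^ a * N ^ 2) :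
    (ArithmeticFunction.sigma 1 (N ^ 2) / p ^ a > 1 ∧ 2 * N ^ 2 > 3 * p ^ a) ∨ (ArithmeticFunction.sigma 1 (N ^ 2) / p ^ a = 1 ∧ a ≥ n.primeFactors.card - 1 ∧ 2 * N ^ 2 > p ^ a) ∨ (a ≥ n.primeFactors.card - 1 ∧ 2 * N ^ 2 > p ^ a ∧ 2 * N ^ 2 > 3 * p ^ a) := by
  subst hform
  have hN2 : N ^ 2 ≠ 0 := pow_ne_zero 2 hN.ne'
  obtain ⟨A, hA, hsA⟩ := exists_sigma_one_eq_prime_pow_mul hp (hcop.pow_right 2) hperf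
  have hdiv : σ 1 (N ^ 2) / p ^ a = A := by rw [hA, Nat.mul_div_cancel_left _ (pow_pos hp.pos a)]
  have hlt : p ^ a < σ 1 (p ^ a) := lt_sigma_one_of_one_lt (one_lt_pow (by omega) hp.one_lt)
  have hAodd : Odd A := by
    obtain ⟨m, hm⟩ := even_sigma_one_prime_pow hp (odd_iff.mpr (by omega : p % 2 = 1))
      (odd_iff.mpr (by omega : a % 2 = 1))
    have hmA : m * A = N ^ 2 := by rw [hm] at hsA; linarith
    exact (hmA ▸ (odd_mul.mp hodd).2).of_mul_right
  obtain rfl | hA3 : A = 1 ∨ 3 ≤ A := by obtain ⟨k, rfl⟩ := hAodd; omega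
  · have hω := card_primeFactors_le_of_sigma_eq_prime_pow hp hN2 (hA.trans (mul_one _))
    have hωn := card_primeFactors_prime_pow_mul_le hp (by omega : a ≠ 0) hN2
    exact Or.inr (Or.inl ⟨hdiv, by omega, by omega⟩)
  · exact Or.inl ⟨by omega, by nlinarith⟩

theorem stmt_5 (n N p a : ℕ) (hn : 0 < n) (hN : 0 < N) (hodd : Odd n)
    (hperf : ArithmeticFunction.sigma 1 n = 2 * n)
    (hp : p.Prime) (hp4 : p % 4 = 1) (ha4 : a % 4 = 1)
    (hcop : Nat.Coprime p N) (hform : n = p ^ a * N ^ 2) :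
    (ArithmeticFunction.sigma 1 (N ^ 2) / p ^ a > 1 ∧ 2 * N ^ 2 > 3 * p ^ a) ∨ (ArithmeticFunction.sigma 1 (N ^ 2) / p ^ a = 1 ∧ a ≥ n.primeFactors.card - 1 ∧ 2 * N ^ 2 > p ^ a) ∨ (a ≥ n.primeFactors.card - 1 ∧ 2 * N ^ 2 > p ^ a ∧ 2 * N ^ 2 > 3 * p ^ a) :=
  stmt_5_general n N p a hN hodd hperf hp hp4 ha4 hcop hform
end
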